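/- If the reading/merging rules rewrite expressions so that l → r is an instance of any rule (r1)-(r6) or (m1)-(m6), then E(l) ≻ E(r), where E is the measure translation into the term algebra T and ≻ is the recursive path ordering generated by the precedence in which each s_i dominates app, lam, cons, * and s_i ⊐ s_j for i > j. -/
import Mathlib


/- Terms of the suspension calculus, including (graftable) meta variables:
meta variables, constants, de Bruijn indices `#i`, applications,
abstractions, and suspensions `[t, ol, nl, e]`; and environments. -/
mutual
inductive Tm : Type where
  | mvar : Nat → Tm
  | const : Nat → Tm
  | idx : Nat → Tm
  | app : Tm → Tm → Tm
  | lam : Tm → Tm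
  | susp : Tm → Nat → Nat → Env → Tm
inductive Env : Type where
  | nil : Env
  | econs : Tm → Nat → Env → Env
  | merge : Env → Nat → Nat → Env → Env
end

/- Root instances of the reading rules (r1)-(r6) and the merging rule (m1)
on terms, and of the merging rules (m2)-(m6) on environments. -/
inductive RootT : Tm → Tm → Prop where
  | r1 : ∀ c ol nl e, RootT (.susp (.const c) ol nl e) (.const c)
  | r2 : ∀ i nl, 1 ≤ i → RootT (.susp (.idx i) 0 nl .nil) (.idx (i + nl))
  | r3 : ∀ ol nl t l e, RootT (.susp (.idx 1) ol nl (.econs t l e)) (.susp t 0 (nl - l) .nil)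
  | r4 : ∀ i ol nl t l e, 1 < i →
      RootT (.susp (.idx i) ol nl (.econs t l e)) (.susp (.idx (i - 1)) (ol - 1) nl e)
  | r5 : ∀ t1 t2 ol nl e,
      RootT (.susp (.app t1 t2) ol nl e) (.app (.susp t1 ol nl e) (.susp t2 ol nl e))
  | r6 : ∀ t ol nl e,
      RootT (.susp (.lam t) ol nl e)
            (.lam (.susp t (ol + 1) (nl + 1) (.econs (.idx 1) (nl + 1) e)))
  | m1 : ∀ t ol1 nl1 e1 ol2 nl2 e2,
      RootT (.susp (.susp t ol1 nl1 e1) ol2 nl2 e2)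
            (.susp t (ol1 + (ol2 - nl1)) (nl2 + (nl1 - ol2)) (.merge e1 nl1 ol2 e2))

inductive RootE : Env → Env → Prop where
  | m2 : ∀ e1 nl1, RootE (.merge e1 nl1 0 .nil) e1
  | m3 : ∀ ol2 e2, RootE (.merge .nil 0 ol2 e2) e2
  | m4 : ∀ nl1 ol2 t l e2, 1 ≤ nl1 →
      RootE (.merge .nil nl1 ol2 (.econs t l e2)) (.merge .nil (nl1 - 1) (ol2 - 1) e2)
  | m5 : ∀ t n e1 nl1 ol2 s l e2, n < nl1 →
      RootE (.merge (.econs t n e1) nl1 ol2 (.econs s l e2))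
            (.merge (.econs t n e1) (nl1 - 1) (ol2 - 1) e2)
  | m6 : ∀ t n e1 ol2 s l e2,
      RootE (.merge (.econs t n e1) n ol2 (.econs s l e2))
            (.econs (.susp t ol2 l (.econs s l e2)) (l + (n - ol2))
                    (.merge e1 n ol2 (.econs s l e2)))

/- The internal-embedding measure μ. -/
mutual
def muT : Tm → Nat
  | .mvar _ => 0
  | .const _ => 0
  | .idx _ => 0
  | .lam t => muT t
  | .app t1 t2 => max (muT t1) (muT t2)
  | .susp t _ _ e => muT t + muE e + 1
def muE : Env → Nat
  | .nil => 0
  | .econs t _ e => max (muT t) (muE e)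
  | .merge e1 _ _ e2 => muE e1 + muE e2 + 1
end

/- The family of measures η_i. -/
mutual
def etaT : Nat → Tm → Nat
  | _, .mvar _ => 1
  | _, .const _ => 1
  | _, .idx _ => 1
  | i, .lam t => etaT i t + 1
  | i, .app t1 t2 => max (etaT i t1) (etaT i t2) + 1
  | i, .susp t _ _ e => etaT (i + 1) t + etaE (i + 1 + muT t) e + 1
def etaE : Nat → Env → Nat
  | _, .nil => 0
  | i, .econs t _ e => max (etaT i t) (etaE i e)
  | i, .merge e1 _ _ e2 => etaE (i + 1) e1 + etaE (i + 1 + muE e1) e2 + 1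
end

/-- The first-order term algebra: constant *, unary lam, binary app, cons,
and a binary symbol s_i for each index i. -/
inductive PTerm : Type where
  | star : PTerm
  | lam : PTerm → PTerm
  | app : PTerm → PTerm → PTerm
  | cons : PTerm → PTerm → PTerm
  | s : Nat → PTerm → PTerm → PTerm

/-- The signature of the term algebra. -/
inductive PSym : Type where
  | star : PSym
  | lam : PSym
  | app : PSym
  | cons : PSym
  | s : Nat → PSym

/-- The precedence ⊐: s_i ⊐ s_j iff i > j, and every s_i dominates
app, lam, cons and *; the latter are mutually incomparable. -/
def PSym.prec : PSym → PSym → Prop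
  | .s i, .s j => j < i
  | .s _, .star => True
  | .s _, .lam => True
  | .s _, .app => True
  | .s _, .cons => True
  | _, _ => False

/-- Head symbol of a term. -/
def PTerm.head : PTerm → PSym
  | .star => .star
  | .lam _ => .lam
  | .app _ _ => .app
  | .cons _ _ => .cons
  | .s i _ _ => .s i

/-- Argument list of a term. -/
def PTerm.args : PTerm → List PTerm
  | .star => []
  | .lam a => [a]
  | .app a b => [a, b]
  | .cons a b => [a, b]
  | .s _ a b => [a, b]

/- The recursive path ordering ≻ generated by the precedence, together with
its lexicographic extension to argument lists.  The subterm case "s_i = t or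
s_i ≻ t" is split into the two constructors `subRefl` and `subGt`. -/
mutual
inductive RpoGt : PTerm → PTerm → Prop where
  | same : ∀ {u t : PTerm}, PTerm.head u = PTerm.head t →
      RpoLex (PTerm.args u) (PTerm.args t) →
      (∀ ti ∈ PTerm.args t, RpoGt u ti) → RpoGt u t
  | prec : ∀ {u t : PTerm}, PSym.prec (PTerm.head u) (PTerm.head t) →
      (∀ ti ∈ PTerm.args t, RpoGt u ti) → RpoGt u t
  | subRefl : ∀ {u t : PTerm}, t ∈ PTerm.args u → RpoGt u t
  | subGt : ∀ {u t : PTerm} (ui : PTerm), ui ∈ PTerm.args u → RpoGt ui t →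
      RpoGt u t
inductive RpoLex : List PTerm → List PTerm → Prop where
  | head : ∀ {a b : PTerm} {l1 l2 : List PTerm}, RpoGt a b →
      RpoLex (a :: l1) (b :: l2)
  | tail : ∀ {a : PTerm} {l1 l2 : List PTerm}, RpoLex l1 l2 →
      RpoLex (a :: l1) (a :: l2)
end

/- The translation E of suspension expressions into the term algebra; the
index of the s symbol for a suspension or merge is its η_0 measure. -/
mutual
def Etm : Tm → PTerm
  | .mvar _ => .star
  | .const _ => .star
  | .idx _ => .star
  | .app t1 t2 => .app (Etm t1) (Etm t2)
  | .lam t => .lam (Etm t)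
  | .susp t _ _ e => .s (etaT 1 t + etaE (1 + muT t) e + 1) (Etm t) (Een e)
def Een : Env → PTerm
  | .nil => .star
  | .econs t _ e => .cons (Etm t) (Een e)
  | .merge e1 _ _ e2 => .s (etaE 1 e1 + etaE (1 + muE e1) e2 + 1) (Een e1) (Een e2)
end

/-! ### Auxiliary lemmas -/

mutual
theorem etaT_indep (t : Tm) (i : Nat) : etaT i t = etaT 0 t := by
  cases t with
  | mvar n => simp [etaT]
  | const n => simp [etaT]
  | idx n => simp [etaT]
  | lam t => simp [etaT, etaT_indep t]
  | app t1 t2 => simp [etaT, etaT_indep t1, etaT_indep t2]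
  | susp t ol nl e =>
      simp only [etaT, etaT_indep t (i + 1), etaT_indep t (0 + 1),
        etaE_indep e (i + 1 + muT t), etaE_indep e (0 + 1 + muT t)]
theorem etaE_indep (e : Env) (i : Nat) : etaE i e = etaE 0 e := by
  cases e with
  | nil => simp [etaE]
  | econs t l e => simp only [etaE, etaT_indep t i, etaT_indep t 0, etaE_indep e i, etaE_indep e 0]
  | merge e1 nl ol e2 =>
      simp only [etaE, etaE_indep e1 (i + 1), etaE_indep e1 (0 + 1),
        etaE_indep e2 (i + 1 + muE e1), etaE_indep e2 (0 + 1 + muE e1)]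
end

/-- All `s`-indices occurring in a term are `< n`. -/
def SLt (n : Nat) : PTerm → Prop
  | .star => True
  | .lam a => SLt n a
  | .app a b => SLt n a ∧ SLt n b
  | .cons a b => SLt n a ∧ SLt n b
  | .s i a b => i < n ∧ SLt n a ∧ SLt n b

theorem SLt.mono {n m : Nat} (h : n ≤ m) : ∀ {t : PTerm}, SLt n t → SLt m t
  | .star, _ => trivial
  | .lam a, ha => SLt.mono h (t := a) ha
  | .app a b, ⟨ha, hb⟩ => ⟨SLt.mono h ha, SLt.mono h hb⟩
  | .cons a b, ⟨ha, hb⟩ => ⟨SLt.mono h ha, SLt.mono h hb⟩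
  | .s i a b, ⟨hi, ha, hb⟩ => ⟨lt_of_lt_of_le hi h, SLt.mono h ha, SLt.mono h hb⟩

/-- `s n a b` dominates every term all of whose `s`-indices are `< n`. -/
theorem rpo_of_SLt (n : Nat) (a b : PTerm) : ∀ {t : PTerm}, SLt n t → RpoGt (.s n a b) t
  | .star, _ => RpoGt.prec trivial (by simp [PTerm.args])
  | .lam c, hc => RpoGt.prec trivial
      (by simp only [PTerm.args, List.mem_singleton]; rintro t rfl; exact rpo_of_SLt n a b hc)
  | .app c d, ⟨hc, hd⟩ => RpoGt.prec trivial
      (by simp only [PTerm.args, List.mem_cons, List.mem_singleton, List.not_mem_nil, or_false]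
          rintro t (rfl | rfl)
          exacts [rpo_of_SLt n a b hc, rpo_of_SLt n a b hd])
  | .cons c d, ⟨hc, hd⟩ => RpoGt.prec trivial
      (by simp only [PTerm.args, List.mem_cons, List.mem_singleton, List.not_mem_nil, or_false]
          rintro t (rfl | rfl)
          exacts [rpo_of_SLt n a b hc, rpo_of_SLt n a b hd])
  | .s i c d, ⟨hi, hc, hd⟩ => RpoGt.prec hi
      (by simp only [PTerm.args, List.mem_cons, List.mem_singleton, List.not_mem_nil, or_false]
          rintro t (rfl | rfl)
          exacts [rpo_of_SLt n a b hc, rpo_of_SLt n a b hd])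

mutual
theorem SLt_Etm : ∀ t : Tm, SLt (etaT 0 t + 1) (Etm t)
  | .mvar _ => trivial
  | .const _ => trivial
  | .idx _ => trivial
  | .lam t => by
      simpa [Etm, etaT, SLt] using SLt.mono (by simp [etaT]) (SLt_Etm t)
  | .app t1 t2 => by
      refine ⟨SLt.mono ?_ (SLt_Etm t1), SLt.mono ?_ (SLt_Etm t2)⟩ <;> simp [etaT] <;> omega
  | .susp t ol nl e => by
      refine ⟨?_, SLt.mono ?_ (SLt_Etm t), SLt.mono ?_ (SLt_Een e)⟩ <;>
        simp only [etaT, etaT_indep, etaE_indep] <;> omega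
theorem SLt_Een : ∀ e : Env, SLt (etaE 0 e + 1) (Een e)
  | .nil => trivial
  | .econs t l e => by
      refine ⟨SLt.mono ?_ (SLt_Etm t), SLt.mono ?_ (SLt_Een e)⟩ <;> simp [etaE] <;> omega
  | .merge e1 nl ol e2 => by
      refine ⟨?_, SLt.mono ?_ (SLt_Een e1), SLt.mono ?_ (SLt_Een e2)⟩ <;>
        simp only [etaE, etaE_indep] <;> omega
end

theorem rpo_dom_Etm {n : Nat} (a b : PTerm) (t : Tm) (h : etaT 0 t < n) :
    RpoGt (.s n a b) (Etm t) :=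
  rpo_of_SLt n a b (SLt.mono h (SLt_Etm t))

theorem rpo_dom_Een {n : Nat} (a b : PTerm) (e : Env) (h : etaE 0 e < n) :
    RpoGt (.s n a b) (Een e) :=
  rpo_of_SLt n a b (SLt.mono h (SLt_Een e))

theorem head_s_eq {i j : Nat} (h : i = j) {a b c d : PTerm} :
    PTerm.head (.s i a b) = PTerm.head (.s j c d) := by subst h; rfl

theorem forall_nil_arg (P : PTerm → Prop) : ∀ t ∈ ([] : List PTerm), P t := by simp

theorem forall_one_arg {P : PTerm → Prop} {a : PTerm} (ha : P a) :
    ∀ t ∈ ([a] : List PTerm), P t := by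
  intro t ht
  simp only [List.mem_singleton] at ht
  subst ht; exact ha

theorem forall_pair_arg {P : PTerm → Prop} {a b : PTerm} (ha : P a) (hb : P b) :
    ∀ t ∈ ([a, b] : List PTerm), P t := by
  intro t ht
  simp only [List.mem_cons, List.not_mem_nil, or_false] at ht
  rcases ht with rfl | rfl
  exacts [ha, hb]

/-- for every root instance l → r of the reading and merging
rules, E(l) ≻ E(r) in the recursive path ordering. -/
theorem rules_decrease_rpo :
    (∀ l r : Tm, RootT l r → RpoGt (Etm l) (Etm r)) ∧
    (∀ l r : Env, RootE l r → RpoGt (Een l) (Een r)) := by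
  constructor
  · intro l r h
    cases h with
    | r1 c ol nl e =>
        exact RpoGt.prec trivial (forall_nil_arg _)
    | r2 i nl hi =>
        exact RpoGt.prec trivial (forall_nil_arg _)
    | r3 ol nl t l e =>
        simp only [Etm, Een, etaT, etaE, etaT_indep, etaE_indep]
        refine rpo_of_SLt _ _ _ ⟨by omega, SLt.mono (by omega) (SLt_Etm t), trivial⟩
    | r4 i ol nl t l e hi =>
        simp only [Etm, Een, etaT, etaE, etaT_indep, etaE_indep]
        rcases le_or_gt (etaT 0 t) (etaE 0 e) with hle | hlt
        · refine RpoGt.same (head_s_eq (by omega)) ?_ ?_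
          · exact RpoLex.tail (RpoLex.head (RpoGt.subRefl (by simp [PTerm.args])))
          · refine forall_pair_arg (RpoGt.prec trivial (forall_nil_arg _)) ?_
            exact rpo_dom_Een _ _ _ (by omega)
        · refine rpo_of_SLt _ _ _ ⟨by omega, trivial, SLt.mono (by omega) (SLt_Een e)⟩
    | r5 t1 t2 ol nl e =>
        simp only [Etm, Een, etaT, etaE, etaT_indep, etaE_indep, muT]
        refine RpoGt.prec trivial (forall_pair_arg ?_ ?_) <;>
          refine rpo_of_SLt _ _ _ ⟨by omega, ?_, SLt.mono (by omega) (SLt_Een e)⟩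
        · exact SLt.mono (by omega) (SLt_Etm t1)
        · exact SLt.mono (by omega) (SLt_Etm t2)
    | r6 t ol nl e =>
        simp only [Etm, Een, etaT, etaE, etaT_indep, etaE_indep, muT]
        refine RpoGt.prec trivial (forall_one_arg ?_)
        rcases Nat.eq_zero_or_pos (etaE 0 e) with h0 | h0
        · refine RpoGt.same (head_s_eq (by omega)) ?_ ?_
          · exact RpoLex.head (RpoGt.subRefl (by simp [PTerm.args]))
          · refine forall_pair_arg (rpo_dom_Etm _ _ _ (by omega)) ?_
            refine RpoGt.prec trivial
              (forall_pair_arg (RpoGt.prec trivial (forall_nil_arg _))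
                (rpo_dom_Een _ _ _ (by omega)))
        · refine rpo_of_SLt _ _ _
            ⟨by omega, SLt.mono (by omega) (SLt_Etm t),
             trivial, SLt.mono (by omega) (SLt_Een e)⟩
    | m1 t ol1 nl1 e1 ol2 nl2 e2 =>
        simp only [Etm, Een, etaT, etaE, etaT_indep, etaE_indep, muT, muE]
        refine RpoGt.same (head_s_eq (by omega)) ?_ ?_
        · exact RpoLex.head (RpoGt.subRefl (by simp [PTerm.args]))
        · refine forall_pair_arg (rpo_dom_Etm _ _ _ (by omega)) ?_
          refine rpo_of_SLt _ _ _
            ⟨by omega, SLt.mono (by omega) (SLt_Een e1), SLt.mono (by omega) (SLt_Een e2)⟩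
  · intro l r h
    cases h with
    | m2 e1 nl1 =>
        exact RpoGt.subRefl (by simp [Een, PTerm.args])
    | m3 ol2 e2 =>
        exact RpoGt.subRefl (by simp [Een, PTerm.args])
    | m4 nl1 ol2 t l e2 h1 =>
        simp only [Etm, Een, etaT, etaE, etaT_indep, etaE_indep]
        rcases le_or_gt (etaT 0 t) (etaE 0 e2) with hle | hlt
        · refine RpoGt.same (head_s_eq (by omega)) ?_ ?_
          · exact RpoLex.tail (RpoLex.head (RpoGt.subRefl (by simp [PTerm.args])))
          · refine forall_pair_arg (RpoGt.prec trivial (forall_nil_arg _)) ?_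
            exact rpo_dom_Een _ _ _ (by omega)
        · refine rpo_of_SLt _ _ _ ⟨by omega, trivial, SLt.mono (by omega) (SLt_Een e2)⟩
    | m5 t n e1 nl1 ol2 s l e2 hn =>
        simp only [Etm, Een, etaT, etaE, etaT_indep, etaE_indep]
        rcases le_or_gt (etaT 0 s) (etaE 0 e2) with hle | hlt
        · refine RpoGt.same (head_s_eq (by omega)) ?_ ?_
          · exact RpoLex.tail (RpoLex.head (RpoGt.subRefl (by simp [PTerm.args])))
          · refine forall_pair_arg (RpoGt.subRefl (by simp [PTerm.args])) ?_
            exact rpo_dom_Een _ _ _ (by omega)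
        · refine rpo_of_SLt _ _ _
            ⟨by omega, ⟨SLt.mono (by omega) (SLt_Etm t), SLt.mono (by omega) (SLt_Een e1)⟩,
             SLt.mono (by omega) (SLt_Een e2)⟩
    | m6 t n e1 ol2 s l e2 =>
        simp only [Etm, Een, etaT, etaE, etaT_indep, etaE_indep, muT, muE]
        refine RpoGt.prec trivial (forall_pair_arg ?_ ?_)
        · rcases le_or_gt (etaE 0 e1) (etaT 0 t) with hle | hlt
          · refine RpoGt.same (head_s_eq (by omega)) ?_ ?_
            · exact RpoLex.head (RpoGt.subRefl (by simp [PTerm.args]))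
            · refine forall_pair_arg (rpo_dom_Etm _ _ _ (by omega)) ?_
              exact RpoGt.subRefl (by simp [PTerm.args])
          · refine rpo_of_SLt _ _ _
              ⟨by omega, SLt.mono (by omega) (SLt_Etm t),
               ⟨SLt.mono (by omega) (SLt_Etm s), SLt.mono (by omega) (SLt_Een e2)⟩⟩
        · rcases le_or_gt (etaT 0 t) (etaE 0 e1) with hle | hlt
          · refine RpoGt.same (head_s_eq (by omega)) ?_ ?_
            · exact RpoLex.head (RpoGt.subRefl (by simp [PTerm.args]))
            · refine forall_pair_arg (rpo_dom_Een _ _ _ (by omega)) ?_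
              exact RpoGt.subRefl (by simp [PTerm.args])
          · refine rpo_of_SLt _ _ _
              ⟨by omega, SLt.mono (by omega) (SLt_Een e1),
               ⟨SLt.mono (by omega) (SLt_Etm s), SLt.mono (by omega) (SLt_Een e2)⟩⟩
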